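/- arXiv:2009.01473 — 3 statements merged into one kernel-verified Lean document; each statement's English description precedes it below -/
import Mathlib

section
/- Let R be a ring. Then the power series ring R[[x]] is a right Archimedean domain if and only if R is a right Archimedean domain. -/
/-- A ring `R` is *right Archimedean* if for every nonunit `a ∈ R`,
`⋂ n, R·aⁿ = {0}`. -/
def RightArchimedean (R : Type*) [Ring R] : Prop :=
  ∀ a : R, ¬ IsUnit a → (⋂ n : ℕ, {x : R | ∃ r : R, x = r * a ^ n}) = {0}

/-!
`R⟦X⟧` retracts onto the constants `R`, so both properties descend from `R⟦X⟧` to `R`.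
Conversely, over a domain the map `divXPowOrder`, which divides out the largest power of `X`, is
multiplicative, so the lowest coefficient of a product is the product of the lowest coefficients.
If `g = r * fⁿ` for every `n` and `f` is a nonunit with nonzero constant term `a`, the lowest
coefficient of `g` thus lies in `⋂ R·aⁿ = 0`; if instead `X ∣ f`, then `g` has order at least `n`
for every `n`. Either way `g = 0`.
-/

theorem rightArchimedean_iff {R : Type*} [Ring R] :
    RightArchimedean R ↔
      ∀ a : R, ¬ IsUnit a → ∀ b : R, (∀ n : ℕ, ∃ r, b = r * a ^ n) → b = 0 := by
  refine forall₂_congr fun a _ => ?_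
  simp only [Set.eq_singleton_iff_unique_mem, Set.mem_iInter, Set.mem_ofPred_eq]
  exact and_iff_right fun n => ⟨0, (zero_mul _).symm⟩

theorem RightArchimedean.of_leftInverse {R S : Type*} [Ring R] [Ring S] (f : R →+* S)
    (g : S →+* R) (hgf : Function.LeftInverse g f) (hS : RightArchimedean S) :
    RightArchimedean R := by
  rw [rightArchimedean_iff] at hS ⊢
  intro a ha b hb
  have hfa : ¬ IsUnit (f a) := fun hu => ha (hgf a ▸ hu.map g)
  refine hgf.injective.eq_iff.mp ?_
  rw [hS (f a) hfa (f b) fun n => ?_, map_zero]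
  obtain ⟨r, hr⟩ := hb n
  exact ⟨f r, by rw [hr, map_mul, map_pow]⟩

namespace PowerSeries

variable {R : Type*} [Ring R]

theorem eq_zero_of_order_ne_zero_of_forall_eq_mul_pow {f g : R⟦X⟧} (hf : order f ≠ 0)
    (hg : ∀ n : ℕ, ∃ r, g = r * f ^ n) : g = 0 := by
  refine order_eq_top.mp (ENat.eq_top_iff_forall_ge.mpr fun n => ?_)
  obtain ⟨r, rfl⟩ := hg n
  calc (n : ℕ∞) ≤ n • order f := by
        simpa using nsmul_le_nsmul_right (Order.one_le_iff_ne_zero.mpr hf) n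
    _ ≤ order (f ^ n) := le_order_pow f n
    _ ≤ order r + order (f ^ n) := le_add_self
    _ ≤ order (r * f ^ n) := le_order_mul r (f ^ n)

theorem rightArchimedean [IsDomain R] (hR : RightArchimedean R) : RightArchimedean R⟦X⟧ := by
  rw [rightArchimedean_iff] at hR ⊢
  intro f hf g hg
  by_cases hf0 : order f = 0
  · have hlow : constantCoeff (divXPowOrder f) = constantCoeff f := by
      rw [constantCoeff_divXPowOrder, hf0, ENat.toNat_zero, coeff_zero_eq_constantCoeff_apply]
    rw [← constantCoeff_divXPowOrder_eq_zero_iff]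
    refine hR _ (mt isUnit_iff_constantCoeff.mpr hf) _ fun n => ?_
    obtain ⟨r, hr⟩ := hg n
    exact ⟨constantCoeff (divXPowOrder r), by
      rw [hr, divXPowOrder_mul, divXPowOrder_pow, map_mul, map_pow, hlow]⟩
  · exact eq_zero_of_order_ne_zero_of_forall_eq_mul_pow hf0 hg

end PowerSeries

/-- The power series ring `R[[x]]` is a right Archimedean domain if and only if
`R` is a right Archimedean domain. -/
theorem powerSeries_rightArchimedean_domain_iff (R : Type*) [Ring R] :
    (IsDomain (PowerSeries R) ∧ RightArchimedean (PowerSeries R)) ↔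
      (IsDomain R ∧ RightArchimedean R) := by
  have hC : Function.LeftInverse (PowerSeries.constantCoeff (R := R)) PowerSeries.C :=
    PowerSeries.constantCoeff_C
  constructor
  · rintro ⟨_, hArch⟩
    exact ⟨hC.injective.isDomain PowerSeries.C, hArch.of_leftInverse _ _ hC⟩
  · rintro ⟨_, hArch⟩
    exact ⟨inferInstance, PowerSeries.rightArchimedean hArch⟩
end

section
/- Let R be a ring. Then the power series ring R[[x]] is a left Archimedean domain if and only if R is a left Archimedean domain. -/
/-!
Both directions are read off the divisibility form `∀ n, aⁿ ∣ x → x = 0` of the Archimedean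
condition. Going down, `R` embeds in `R⟦X⟧` through the constants, which reflect units.
Going up, a nonunit `f` has a nonunit constant term `a`. If `a = 0`, every `fⁿ ∣ h` forces
`order h ≥ n`, so `h = 0`. If `a ≠ 0`, then `f` has order `0`, and since the lowest nonzero
coefficient is multiplicative over a domain, `fⁿ ∣ h` gives `aⁿ ∣` (lowest coefficient of `h`);
Archimedeanity of `R` kills that coefficient, hence `h`.
-/

/-- A ring `R` is *left Archimedean* if for every nonunit `a ∈ R`,
`⋂ n, aⁿ·R = {0}`. -/
def LeftArchimedean (R : Type*) [Ring R] : Prop :=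
  ∀ a : R, ¬ IsUnit a → (⋂ n : ℕ, {x : R | ∃ r : R, x = a ^ n * r}) = {0}

theorem leftArchimedean_iff {R : Type*} [Ring R] :
    LeftArchimedean R ↔ ∀ a : R, ¬IsUnit a → ∀ x : R, (∀ n : ℕ, a ^ n ∣ x) → x = 0 := by
  refine forall_congr' fun a => imp_congr_right fun _ => ?_
  simp only [Set.eq_singleton_iff_unique_mem, Set.mem_iInter, Set.mem_ofPred_eq]
  exact and_iff_right fun n => ⟨0, (mul_zero _).symm⟩

namespace PowerSeries

variable {R : Type*}

theorem eq_zero_of_forall_pow_dvd_of_constantCoeff_eq_zero [Semiring R] {f h : R⟦X⟧}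
    (hf : constantCoeff f = 0) (hdvd : ∀ n : ℕ, f ^ n ∣ h) : h = 0 := by
  refine order_eq_top.mp (ENat.eq_top_iff_forall_ge.mpr fun n => ?_)
  obtain ⟨g, rfl⟩ := hdvd n
  calc (n : ℕ∞) ≤ order (f ^ n) := le_order_pow_of_constantCoeff_eq_zero n hf
    _ ≤ order (f ^ n) + order g := le_self_add
    _ ≤ order (f ^ n * g) := le_order_mul _ _

theorem divXPowOrder_of_constantCoeff_ne_zero [Semiring R] {f : R⟦X⟧}
    (hf : constantCoeff f ≠ 0) : divXPowOrder f = f := by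
  have hord : f.order = 0 := not_imp_comm.mp order_ne_zero_iff_constCoeff_eq_zero.mp hf
  ext n
  simp [hord]

theorem pow_constantCoeff_dvd_constantCoeff_divXPowOrder [Semiring R] [NoZeroDivisors R]
    {f h : R⟦X⟧} (hf : constantCoeff f ≠ 0) {n : ℕ} (hdvd : f ^ n ∣ h) :
    constantCoeff f ^ n ∣ constantCoeff (divXPowOrder h) := by
  obtain ⟨g, rfl⟩ := hdvd
  have hfn : constantCoeff (f ^ n) ≠ 0 := by
    rw [map_pow]
    exact pow_ne_zero n hf
  rw [divXPowOrder_mul, divXPowOrder_of_constantCoeff_ne_zero hfn, map_mul, map_pow]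
  exact dvd_mul_right _ _

end PowerSeries

open PowerSeries

theorem LeftArchimedean.powerSeries {R : Type*} [Ring R] [NoZeroDivisors R]
    (hR : LeftArchimedean R) : LeftArchimedean R⟦X⟧ := by
  rw [leftArchimedean_iff] at hR ⊢
  intro f hf h hdvd
  have ha : ¬IsUnit (constantCoeff f) := mt isUnit_iff_constantCoeff.mpr hf
  by_cases ha0 : constantCoeff f = 0
  · exact eq_zero_of_forall_pow_dvd_of_constantCoeff_eq_zero ha0 hdvd
  · exact constantCoeff_divXPowOrder_eq_zero_iff.mp <| hR _ ha _ fun n =>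
      pow_constantCoeff_dvd_constantCoeff_divXPowOrder ha0 (hdvd n)

theorem LeftArchimedean.of_powerSeries {R : Type*} [Ring R]
    (hA : LeftArchimedean R⟦X⟧) : LeftArchimedean R := by
  rw [leftArchimedean_iff] at hA ⊢
  intro a ha x hdvd
  have hCa : ¬IsUnit (C a) := by rwa [isUnit_iff_constantCoeff, constantCoeff_C]
  refine (map_eq_zero_iff C C_injective).mp (hA (C a) hCa (C x) fun n => ?_)
  simpa only [map_pow] using map_dvd C (hdvd n)

/-- The power series ring `R[[x]]` is a left Archimedean domain if and only if
`R` is a left Archimedean domain. -/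
theorem powerSeries_leftArchimedean_domain_iff (R : Type*) [Ring R] :
    (IsDomain (PowerSeries R) ∧ LeftArchimedean (PowerSeries R)) ↔
      (IsDomain R ∧ LeftArchimedean R) :=
  ⟨fun ⟨_, hA⟩ => ⟨C_injective.isDomain C, hA.of_powerSeries⟩,
    fun ⟨_, hR⟩ => ⟨inferInstance, hR.powerSeries⟩⟩
end

section
/- Let Γ be a linearly ordered, cancellative, additive commutative monoid and let R be a ring. If the Hahn series ring HahnSeries(Γ, R) is a left Archimedean domain, then R is a left Archimedean domain. -/
theorem LeftArchimedean.of_injective {R S : Type*} [Ring R] [Ring S] (f : R →+* S)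
    [IsLocalHom f] (hf : Function.Injective f) (h : LeftArchimedean S) : LeftArchimedean R := by
  intro a ha
  refine Set.Subset.antisymm (fun x hx => ?_) (by simpa using fun _ => ⟨0, (mul_zero _).symm⟩)
  have hfx : f x ∈ ⋂ n : ℕ, {y : S | ∃ r : S, y = f a ^ n * r} := by
    simp only [Set.mem_iInter, Set.mem_ofPred_eq] at hx ⊢
    intro n
    obtain ⟨r, rfl⟩ := hx n
    exact ⟨f r, by rw [map_mul, map_pow]⟩
  rw [h (f a) (fun hu => ha (hu.of_map f a))] at hfx
  exact hf (hfx.trans (map_zero f).symm)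

namespace HahnSeries

variable {Γ R : Type*} [AddCommMonoid Γ] [LinearOrder Γ] [IsOrderedCancelAddMonoid Γ] [Ring R]

/-- `coeff · 0` is not multiplicative in general, but it is on products with a constant, so the
constant coefficient of the inverse of `C a` inverts `a`. -/
theorem isUnit_of_isUnit_C {a : R} (h : IsUnit (C a : HahnSeries Γ R)) : IsUnit a := by
  obtain ⟨u, hu⟩ := h
  refine ⟨⟨a, (↑u⁻¹ : HahnSeries Γ R).coeff 0, ?_, ?_⟩, rfl⟩
  · have h1 := congrArg (coeff · 0) u.mul_inv
    rw [hu, C_apply] at h1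
    simpa only [coeff_single_zero_mul, coeff_one, if_pos] using h1
  · have h1 := congrArg (coeff · 0) u.inv_mul
    rw [hu, C_apply] at h1
    simpa only [coeff_mul_single_zero, coeff_one, if_pos] using h1

instance isLocalHom_C : IsLocalHom (C : R →+* HahnSeries Γ R) :=
  ⟨fun _ => isUnit_of_isUnit_C⟩

end HahnSeries

/-- If the Hahn series ring `HahnSeries Γ R` is a left Archimedean domain, then `R`
is a left Archimedean domain. -/
theorem leftArchimedean_domain_of_hahnSeries (Γ : Type*)
    [AddCommMonoid Γ] [LinearOrder Γ] [IsOrderedCancelAddMonoid Γ] (R : Type*) [Ring R]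
    (hdom : IsDomain (HahnSeries Γ R)) (harch : LeftArchimedean (HahnSeries Γ R)) :
    IsDomain R ∧ LeftArchimedean R :=
  ⟨HahnSeries.C_injective.isDomain (HahnSeries.C : R →+* HahnSeries Γ R),
    harch.of_injective HahnSeries.C HahnSeries.C_injective⟩
end
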